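/- Let k, m ≥ 1 be integers and ε > 0. Let D = D_1 × D_2 × ... × D_m be an m-product probability distribution on [k]^m, where each D_r is a probability distribution on {1,...,k}. Let a_1,...,a_{k+1} be the output of the granularising algorithm applied to the probability vector of D_1 (with n := k), let D'_1 be the distribution on {1,...,k+1} with D'_1(i) = a_i/(8k), and let D' := D'_1 × D_2 × ... × D_m on {1,...,k+1} × [k]^{m−1}. Let X : [k]^m → {0,1}, let L be a nonempty set of functions [k]^m → {0,1}, and let L_0 := {g^cat(Y) : Y ∈ L}. If d_D(X, L) > ε, then d_{D'}(g^cat(X), L_0) > ε/2. Moreover, if X ∈ L then g^cat(X) ∈ L_0. -/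

import Mathlib

/-- Distance between two functions along a distribution `D` on a finite index set:
`d_D(x,y) = ∑_{i : x i ≠ y i} D i`. -/
noncomputable def dDist {α β : Type*} [Fintype α] (D : α → ℝ) (x y : α → β) : ℝ :=
  letI := Classical.decEq β
  ∑ i, if x i = y i then 0 else D i

/-- Distance from a point to a (nonempty) set of functions:
`d_D(x,L) = min_{y ∈ L} d_D(x,y)`. -/
noncomputable def dSetDist {α β : Type*} [Fintype α] (D : α → ℝ) (x : α → β)
    (L : Set (α → β)) : ℝ :=
  sInf ((fun y => dDist D x y) '' L)

/-- The last granularity output by the granularising algorithm: `a_{k+1} = 8k − ∑ᵢ aᵢ`. -/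
def lastGrain {k : ℕ} (a : Fin k → ℕ) : ℕ := 8 * k - ∑ i, a i

/-- The `8k`-grained distribution on `{1,...,k+1}` defined by the granularities. -/
noncomputable def granDist {k : ℕ} (a : Fin k → ℕ) : Fin (k + 1) → ℝ :=
  Fin.snoc (fun i => (a i : ℝ) / (8 * k)) ((lastGrain a : ℝ) / (8 * k))

/-- The `(m+1)`-product distribution `D = D₁ × D₂ × ⋯ × D_{m+1}` on
`[k]^{m+1} ≅ {1,...,k} × [k]^m`, given the coordinate distributions `Ds`. -/
noncomputable def prodD {k m : ℕ} (Ds : Fin (m + 1) → Fin k → ℝ) :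
    Fin k × (Fin m → Fin k) → ℝ :=
  fun q => Ds 0 q.1 * ∏ r : Fin m, Ds r.succ (q.2 r)

/-- The distribution `D' = D₁' × D₂ × ⋯ × D_{m+1}` on `{1,...,k+1} × [k]^m`, where the
first coordinate distribution has been replaced by `D₁'`. -/
noncomputable def prodD' {k m : ℕ} (D₁' : Fin (k + 1) → ℝ) (Ds : Fin (m + 1) → Fin k → ℝ) :
    Fin (k + 1) × (Fin m → Fin k) → ℝ :=
  fun q => D₁' q.1 * ∏ r : Fin m, Ds r.succ (q.2 r)

/-- `g^cat(X)` agrees with `X` on first-coordinate values `1,...,k` and is identically `0`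
(i.e. `false`) on first-coordinate value `k+1`. -/
def gcatB {k : ℕ} {Γ : Type*} (X : Fin k × Γ → Bool) : Fin (k + 1) × Γ → Bool :=
  fun q => (Fin.snoc (fun i (j : Γ) => X (i, j)) (fun _ => false) : Fin (k + 1) → Γ → Bool)
    q.1 q.2

/-! Since `⌊6k·p⌋ + 2 > 6k·p`, each granularised weight `aᵢ/(8k)` is at least `D₁(i)/2`, so every
point of `{1,...,k} × [k]^m` weighs at least half as much under `D'` as under `D`. The lifts
`g^cat(X)` and `g^cat(Y)` agree on the new first-coordinate value `k+1`, hence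
`d_{D'}(g^cat X, g^cat Y) ≥ d_D(X, Y)/2`, and taking infima over `L` gives the claim. -/

section Distance

variable {α β : Type*} [Fintype α]

lemma dDist_nonneg {D : α → ℝ} (hD : ∀ i, 0 ≤ D i) (x y : α → β) : 0 ≤ dDist D x y := by
  unfold dDist
  exact Finset.sum_nonneg fun i _ => by split <;> simp [hD i]

lemma dDist_mono {D E : α → ℝ} (h : ∀ i, D i ≤ E i) (x y : α → β) :
    dDist D x y ≤ dDist E x y := by
  unfold dDist
  exact Finset.sum_le_sum fun i _ => by split <;> simp [h i]

lemma dDist_const_mul (c : ℝ) (D : α → ℝ) (x y : α → β) :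
    dDist (fun i => c * D i) x y = c * dDist D x y := by
  unfold dDist
  rw [Finset.mul_sum]
  exact Finset.sum_congr rfl fun i _ => by split <;> simp

lemma dSetDist_le_dDist {D : α → ℝ} (hD : ∀ i, 0 ≤ D i) {x y : α → β} {L : Set (α → β)}
    (hy : y ∈ L) : dSetDist D x L ≤ dDist D x y :=
  csInf_le ⟨0, by rintro _ ⟨z, -, rfl⟩; exact dDist_nonneg hD x z⟩ ⟨y, hy, rfl⟩

lemma le_dSetDist {D : α → ℝ} {x : α → β} {L : Set (α → β)} {r : ℝ} (hL : L.Nonempty)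
    (h : ∀ y ∈ L, r ≤ dDist D x y) : r ≤ dSetDist D x L :=
  le_csInf (hL.image _) (by rintro _ ⟨y, hy, rfl⟩; exact h y hy)

lemma mul_dSetDist_le_dSetDist_image {α' β' : Type*} [Fintype α'] {D : α → ℝ} {E : α' → ℝ}
    (hD : ∀ i, 0 ≤ D i) {c : ℝ} (hc : 0 ≤ c) (f : (α → β) → α' → β') {x : α → β}
    {L : Set (α → β)} (hL : L.Nonempty) (h : ∀ y ∈ L, c * dDist D x y ≤ dDist E (f x) (f y)) :
    c * dSetDist D x L ≤ dSetDist E (f x) (f '' L) := by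
  refine le_dSetDist (hL.image f) ?_
  rintro _ ⟨y, hy, rfl⟩
  exact (mul_le_mul_of_nonneg_left (dSetDist_le_dDist hD hy) hc).trans (h y hy)

end Distance

lemma dDist_gcatB {k : ℕ} {Γ : Type*} [Fintype Γ] (D : Fin (k + 1) × Γ → ℝ)
    (X Y : Fin k × Γ → Bool) :
    dDist D (gcatB X) (gcatB Y) = dDist (fun q => D (q.1.castSucc, q.2)) X Y := by
  simp only [dDist, Fintype.sum_prod_type, Fin.sum_univ_castSucc, gcatB, Fin.snoc_castSucc,
    Fin.snoc_last, if_true, Finset.sum_const_zero, add_zero]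

lemma inv_two_mul_le_granDist {k : ℕ} (hk : 1 ≤ k) {p : Fin k → ℝ} {a : Fin k → ℕ}
    (ha : ∀ i, a i = ⌊6 * (k : ℝ) * p i⌋₊ + 2) (i : Fin k) :
    2⁻¹ * p i ≤ granDist a i.castSucc := by
  have hk' : (1 : ℝ) ≤ k := by exact_mod_cast hk
  have hfloor : 6 * (k : ℝ) * p i < a i := by
    rw [ha i]
    push_cast
    linarith [Nat.lt_floor_add_one (6 * (k : ℝ) * p i)]
  have ha0 : (0 : ℝ) ≤ a i := Nat.cast_nonneg _
  rw [granDist, Fin.snoc_castSucc, le_div_iff₀ (by positivity)]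
  rcases le_total 0 (p i) with hp | hp <;> nlinarith

lemma prodD_nonneg {k m : ℕ} {Ds : Fin (m + 1) → Fin k → ℝ} (hDs0 : ∀ r i, 0 ≤ Ds r i)
    (q : Fin k × (Fin m → Fin k)) : 0 ≤ prodD Ds q :=
  mul_nonneg (hDs0 _ _) (Finset.prod_nonneg fun _ _ => hDs0 _ _)

lemma mul_prodD_le_prodD' {k m : ℕ} {Ds : Fin (m + 1) → Fin k → ℝ} {D₁' : Fin (k + 1) → ℝ}
    {c : ℝ} (hDs0 : ∀ r i, 0 ≤ Ds r i) (h : ∀ i, c * Ds 0 i ≤ D₁' i.castSucc)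
    (q : Fin k × (Fin m → Fin k)) : c * prodD Ds q ≤ prodD' D₁' Ds (q.1.castSucc, q.2) := by
  rw [prodD, prodD', ← mul_assoc]
  exact mul_le_mul_of_nonneg_right (h q.1) (Finset.prod_nonneg fun _ _ => hDs0 _ _)

theorem product_granularise_preserves_distance_general {k m : ℕ} (hk : 1 ≤ k)
    (ε : ℝ)
    (Ds : Fin (m + 1) → Fin k → ℝ)
    (hDs0 : ∀ r i, 0 ≤ Ds r i)
    (a : Fin k → ℕ) (ha : ∀ i, a i = ⌊(6 * (k : ℝ)) * Ds 0 i⌋₊ + 2)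
    (X : Fin k × (Fin m → Fin k) → Bool)
    (L : Set (Fin k × (Fin m → Fin k) → Bool)) (hL : L.Nonempty) :
    (ε < dSetDist (prodD Ds) X L →
      ε / 2 < dSetDist (prodD' (granDist a) Ds) (gcatB X) (gcatB '' L)) ∧
    (X ∈ L → gcatB X ∈ gcatB '' L) := by
  refine ⟨fun hε => ?_, Set.mem_image_of_mem gcatB⟩
  have hhalf : 2⁻¹ * dSetDist (prodD Ds) X L
      ≤ dSetDist (prodD' (granDist a) Ds) (gcatB X) (gcatB '' L) := by
    refine mul_dSetDist_le_dSetDist_image (prodD_nonneg hDs0) (by norm_num) gcatB hL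
      fun Y _ => ?_
    rw [dDist_gcatB, ← dDist_const_mul]
    exact dDist_mono (mul_prodD_le_prodD' hDs0 (inv_two_mul_le_granDist hk ha)) X Y
  linarith

/-- Granularising the first coordinate of an `(m+1)`-product distribution preserves
distances: if `d_D(X,L) > ε` then `d_{D'}(g^cat(X), L₀) > ε/2`, and if `X ∈ L` then
`g^cat(X) ∈ L₀`.  (Here the paper's `m ≥ 1` is `m + 1` for `m : ℕ`.) -/
theorem product_granularise_preserves_distance {k m : ℕ} (hk : 1 ≤ k)
    (ε : ℝ) (hε : 0 < ε)
    (Ds : Fin (m + 1) → Fin k → ℝ)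
    (hDs0 : ∀ r i, 0 ≤ Ds r i) (hDs1 : ∀ r, ∑ i, Ds r i = 1)
    (a : Fin k → ℕ) (ha : ∀ i, a i = ⌊(6 * (k : ℝ)) * Ds 0 i⌋₊ + 2)
    (X : Fin k × (Fin m → Fin k) → Bool)
    (L : Set (Fin k × (Fin m → Fin k) → Bool)) (hL : L.Nonempty) :
    (ε < dSetDist (prodD Ds) X L →
      ε / 2 < dSetDist (prodD' (granDist a) Ds) (gcatB X) (gcatB '' L)) ∧
    (X ∈ L → gcatB X ∈ gcatB '' L) :=
  product_granularise_preserves_distance_general hk ε Ds hDs0 a ha X L hL
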